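/- Let n ≥ 1 and let T : ℝⁿ → ℝⁿ be monotone, additively homogeneous, and convex. Let i ∈ {1,…,n} and J ⊆ {1,…,n}, and suppose the set {T_i(−t·e_{Jᶜ}) : t ≥ 0} is bounded below. Then, setting J' = J ∩ supp(T_i), the set J' is nonempty and the set {T_i(−t·e_{J'ᶜ}) : t ≥ 0} is bounded below. -/
import Mathlib


/-- `T` is additively homogeneous: `T(x + c·e) = T(x) + c·e`. -/
def AddHomog (n : ℕ) (T : (Fin n → ℝ) → (Fin n → ℝ)) : Prop :=
  ∀ (x : Fin n → ℝ) (c : ℝ), T (fun i => x i + c) = fun i => T x i + c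

/-- The support of `g : ℝⁿ → ℝ`: indices `i` on which `g` effectively depends. -/
def Supp (n : ℕ) (g : (Fin n → ℝ) → ℝ) : Set (Fin n) :=
  {i | ∃ x y : Fin n → ℝ, (∀ j, j ≠ i → x j = y j) ∧ g x ≠ g y}

/-- If two vectors agree on the support of `g`, then `g` takes the same value. -/
lemma supp_eq_aux (n : ℕ) (g : (Fin n → ℝ) → ℝ) :
    ∀ (s : Finset (Fin n)) (x y : Fin n → ℝ),
      (∀ j, x j ≠ y j → j ∈ s) → (∀ j ∈ Supp n g, x j = y j) → g x = g y := by
  intro s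
  induction s using Finset.induction_on with
  | empty =>
    intro x y h _
    have hxy : x = y := funext fun j => by
      by_contra hj
      exact absurd (h j hj) (Finset.notMem_empty j)
    rw [hxy]
  | @insert a s' _ ih =>
    intro x y h hs
    set z := Function.update x a (y a) with hz
    have hxz : g x = g z := by
      by_cases hsup : a ∈ Supp n g
      · have hxa : x a = y a := hs a hsup
        have : z = x := by
          funext j; by_cases hj : j = a
          · subst hj; simp [hz, hxa.symm]
          · simp [hz, Function.update_of_ne hj]
        rw [this]
      · by_contra hne
        exact hsup ⟨x, z, fun j hj => (Function.update_of_ne hj _ _).symm, hne⟩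
    rw [hxz]
    apply ih
    · intro j hj
      by_cases hja : j = a
      · subst hja; simp [hz] at hj
      · have hxjyj : x j ≠ y j := by
          simpa [hz, Function.update_of_ne hja] using hj
        have := h j hxjyj
        simpa [Finset.mem_insert, hja] using this
    · intro j hjs
      by_cases hja : j = a
      · subst hja; simp [hz]
      · simp only [hz, Function.update_of_ne hja]
        exact hs j hjs

lemma supp_eq (n : ℕ) (g : (Fin n → ℝ) → ℝ) (x y : Fin n → ℝ)
    (h : ∀ j ∈ Supp n g, x j = y j) : g x = g y :=
  supp_eq_aux n g Finset.univ x y (fun j _ => Finset.mem_univ j) h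

theorem stmt19 (n : ℕ) (hn : 1 ≤ n)
    (T : (Fin n → ℝ) → (Fin n → ℝ))
    (hmono : Monotone T) (hhom : AddHomog n T)
    (hconv : ∀ i, ConvexOn ℝ Set.univ (fun x => T x i))
    (i : Fin n) (J : Set (Fin n))
    (hbd : ∃ c : ℝ, ∀ t : ℝ, 0 ≤ t → c ≤ T (Jᶜ.indicator fun _ => -t) i) :
    (J ∩ Supp n (fun x => T x i)).Nonempty ∧
    ∃ c : ℝ, ∀ t : ℝ, 0 ≤ t →
      c ≤ T ((J ∩ Supp n (fun x => T x i))ᶜ.indicator fun _ => -t) i := by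
  obtain ⟨c, hc⟩ := hbd
  set g : (Fin n → ℝ) → ℝ := fun x => T x i with hg
  constructor
  · by_contra hne
    rw [Set.not_nonempty_iff_eq_empty] at hne
    -- then the indicator agrees with the constant -t on the support
    have key : ∀ t : ℝ, g (Jᶜ.indicator fun _ => -t) = g (fun _ => -t) := by
      intro t
      apply supp_eq
      intro j hj
      have hjJ : j ∉ J := fun hjJ => by
        have : j ∈ J ∩ Supp n g := ⟨hjJ, hj⟩
        rw [hne] at this
        exact this
      simp [Set.indicator_of_mem (Set.mem_compl hjJ)]
    have hconst : ∀ t : ℝ, g (fun _ => -t) = g (fun _ => 0) + (-t) := by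
      intro t
      have := hhom (fun _ => 0) (-t)
      have := congrFun this i
      simpa using this
    set t := max 0 (g (fun _ => 0) - c + 1) with ht
    have ht0 : 0 ≤ t := le_max_left _ _
    have ht1 : g (fun _ => 0) - c + 1 ≤ t := le_max_right _ _
    have := hc t ht0
    rw [show T (Jᶜ.indicator fun _ => -t) i = g (Jᶜ.indicator fun _ => -t) from rfl,
      key t, hconst t] at this
    linarith
  · refine ⟨c, fun t ht => ?_⟩
    have key : g ((J ∩ Supp n g)ᶜ.indicator fun _ => -t) = g (Jᶜ.indicator fun _ => -t) := by
      apply supp_eq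
      intro j hj
      by_cases hjJ : j ∈ J
      · have : j ∉ (J ∩ Supp n g)ᶜ := fun h => h ⟨hjJ, hj⟩
        have h2 : j ∉ Jᶜ := fun h => h hjJ
        simp [Set.indicator_of_notMem this, Set.indicator_of_notMem h2]
      · have : j ∈ (J ∩ Supp n g)ᶜ := fun h => hjJ h.1
        simp [Set.indicator_of_mem this, Set.indicator_of_mem (Set.mem_compl hjJ)]
    calc c ≤ T (Jᶜ.indicator fun _ => -t) i := hc t ht
      _ = _ := (key).symm
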